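/- Let L_w = L + L̂ ε be the dual Laplacian of a connected dual number weighted graph on n vertices, with L_w† = L† - L† L̂ L† ε. Then I - L_w L_w† = I - L_w† L_w = (1/n) J. -/

import Mathlib

open Matrix

/-- The dual matrix `A_s + A_d ε` built from its standard and infinitesimal parts. -/
def dm {m n : Type*} (A B : Matrix m n ℝ) : Matrix m n (DualNumber ℝ) :=
  Matrix.of fun i j => TrivSqZeroExt.inl (A i j) + TrivSqZeroExt.inr (B i j)

/-! Since `G` is connected, the kernel of its Laplacian `L` is spanned by the all-ones vector, so
the Penrose equations force `L L† = L† L = I - J / n`. As `J L̂ = L̂ J = 0`, the projection `I - J / n`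
fixes `L̂` from either side, and this kills the infinitesimal parts of `I - L_w L_w†` and
`I - L_w† L_w`. -/

section DualMatrix

variable {m n : Type*}

lemma dm_mul {p : Type*} [Fintype n] (A B : Matrix m n ℝ) (C D : Matrix n p ℝ) :
    dm A B * dm C D = dm (A * C) (A * D + B * C) := by
  ext i j <;>
    simp [dm, Matrix.mul_apply, TrivSqZeroExt.fst_sum, TrivSqZeroExt.snd_sum,
      Finset.sum_add_distrib, mul_comm]

lemma one_sub_dm [DecidableEq n] (A B : Matrix n n ℝ) :
    (1 : Matrix n n (DualNumber ℝ)) - dm A B = dm (1 - A) (-B) := by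
  ext i j <;> simp [dm, Matrix.one_apply, apply_ite]

lemma dm_smul_of_one_zero (c : ℝ) :
    dm (c • Matrix.of fun (_ : m) (_ : n) => (1 : ℝ)) 0 =
      c • Matrix.of fun (_ : m) (_ : n) => (1 : DualNumber ℝ) := by
  ext i j <;> simp [dm]

variable [Fintype n] [DecidableEq n]

lemma one_sub_dm_mul_dm_neg {A B X : Matrix n n ℝ} (hB : (1 - A * X) * B = 0) :
    1 - dm A B * dm X (-(X * B * X)) = dm (1 - A * X) 0 := by
  rw [dm_mul, one_sub_dm]
  congr 1
  calc -(A * -(X * B * X) + B * X) = -((1 - A * X) * B) * X := by noncomm_ring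
    _ = 0 := by rw [hB, neg_zero, Matrix.zero_mul]

lemma one_sub_dm_neg_mul_dm {A B X : Matrix n n ℝ} (hB : B * (1 - X * A) = 0) :
    1 - dm X (-(X * B * X)) * dm A B = dm (1 - X * A) 0 := by
  rw [dm_mul, one_sub_dm]
  congr 1
  calc -(X * B + -(X * B * X) * A) = -(X * (B * (1 - X * A))) := by noncomm_ring
    _ = 0 := by rw [hB, Matrix.mul_zero, neg_zero]

end DualMatrix

namespace SimpleGraph.Connected

variable {V : Type*} [Fintype V] [DecidableEq V] {G : SimpleGraph V} [DecidableRel G.Adj]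

lemma eq_of_lapMatrix_mul_eq_zero (hG : G.Connected) {P : Matrix V V ℝ}
    (hLP : G.lapMatrix ℝ * P = 0) (hP : (fun _ => (1 : ℝ)) ᵥ* P = fun _ => 1) :
    P = (Fintype.card V : ℝ)⁻¹ • Matrix.of fun _ _ => (1 : ℝ) := by
  ext i j
  have hker : G.lapMatrix ℝ *ᵥ (fun k => P k j) = 0 :=
    funext fun k => congrFun (congrFun hLP k) j
  have hconst : ∀ k, P k j = P i j := fun k =>
    G.lapMatrix_mulVec_eq_zero_iff_forall_reachable.mp hker k i (hG.preconnected k i)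
  have hsum : (Fintype.card V : ℝ) * P i j = 1 := by
    calc (Fintype.card V : ℝ) * P i j = ∑ k, P k j := by simp [hconst]
      _ = 1 := by simpa [vecMul, dotProduct] using congrFun hP j
  simpa using eq_inv_of_mul_eq_one_right hsum

lemma one_sub_lapMatrix_mul_eq (hG : G.Connected) {X : Matrix V V ℝ}
    (h1 : G.lapMatrix ℝ * X * G.lapMatrix ℝ = G.lapMatrix ℝ)
    (h3 : (G.lapMatrix ℝ * X)ᵀ = G.lapMatrix ℝ * X) :
    1 - G.lapMatrix ℝ * X = (Fintype.card V : ℝ)⁻¹ • Matrix.of fun _ _ => (1 : ℝ) := by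
  have hLsym : (G.lapMatrix ℝ)ᵀ = G.lapMatrix ℝ := G.isSymm_lapMatrix ℝ
  have hLLX : G.lapMatrix ℝ * (G.lapMatrix ℝ * X) = G.lapMatrix ℝ := by
    simpa only [transpose_mul, h3, hLsym] using congrArg transpose h1
  have h1L : (fun _ => (1 : ℝ)) ᵥ* G.lapMatrix ℝ = 0 := by
    rw [← hLsym, vecMul_transpose, lapMatrix_mulVec_const_eq_zero]
  apply hG.eq_of_lapMatrix_mul_eq_zero
  · rw [Matrix.mul_sub, mul_one, hLLX, sub_self]
  · rw [vecMul_sub, vecMul_one, ← vecMul_vecMul, h1L, zero_vecMul, sub_zero]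

/-- Transposing the Penrose equations turns `L† L` into `L (L†)ᵀ`. -/
lemma one_sub_mul_lapMatrix_eq (hG : G.Connected) {X : Matrix V V ℝ}
    (h1 : G.lapMatrix ℝ * X * G.lapMatrix ℝ = G.lapMatrix ℝ)
    (h4 : (X * G.lapMatrix ℝ)ᵀ = X * G.lapMatrix ℝ) :
    1 - X * G.lapMatrix ℝ = (Fintype.card V : ℝ)⁻¹ • Matrix.of fun _ _ => (1 : ℝ) := by
  have hLsym : (G.lapMatrix ℝ)ᵀ = G.lapMatrix ℝ := G.isSymm_lapMatrix ℝ
  have hLXt : G.lapMatrix ℝ * Xᵀ = X * G.lapMatrix ℝ := by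
    rw [← h4, transpose_mul, hLsym]
  rw [← hLXt]
  apply hG.one_sub_lapMatrix_mul_eq
  · simpa only [transpose_mul, hLsym, Matrix.mul_assoc] using congrArg transpose h1
  · rw [hLXt, h4]

end SimpleGraph.Connected

theorem dual_laplacian_mp_complement_general {n : ℕ}
    (G : SimpleGraph (Fin n)) [DecidableRel G.Adj] (hG : G.Connected)
    (Lhat : Matrix (Fin n) (Fin n) ℝ)
    (hrow : Lhat *ᵥ (fun _ => (1 : ℝ)) = 0)
    (hcol : (fun _ => (1 : ℝ)) ᵥ* Lhat = 0)
    (Ld : Matrix (Fin n) (Fin n) ℝ)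
    (h1 : G.lapMatrix ℝ * Ld * G.lapMatrix ℝ = G.lapMatrix ℝ)
    (h3 : (G.lapMatrix ℝ * Ld)ᵀ = G.lapMatrix ℝ * Ld)
    (h4 : (Ld * G.lapMatrix ℝ)ᵀ = Ld * G.lapMatrix ℝ) :
    (1 : Matrix (Fin n) (Fin n) (DualNumber ℝ))
        - dm (G.lapMatrix ℝ) Lhat * dm Ld (-(Ld * Lhat * Ld))
      = (n : ℝ)⁻¹ • Matrix.of (fun _ _ => (1 : DualNumber ℝ)) ∧
    (1 : Matrix (Fin n) (Fin n) (DualNumber ℝ))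
        - dm Ld (-(Ld * Lhat * Ld)) * dm (G.lapMatrix ℝ) Lhat
      = (n : ℝ)⁻¹ • Matrix.of (fun _ _ => (1 : DualNumber ℝ)) := by
  have hQ := hG.one_sub_lapMatrix_mul_eq h1 h3
  have hP := hG.one_sub_mul_lapMatrix_eq h1 h4
  rw [Fintype.card_fin] at hQ hP
  have hJL : (Matrix.of fun _ _ => (1 : ℝ)) * Lhat = 0 := by
    ext i j
    simpa [Matrix.mul_apply, vecMul, dotProduct] using congrFun hcol j
  have hLJ : Lhat * (Matrix.of fun _ _ => (1 : ℝ)) = 0 := by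
    ext i j
    simpa [Matrix.mul_apply, mulVec, dotProduct] using congrFun hrow i
  constructor
  · rw [one_sub_dm_mul_dm_neg (by rw [hQ, smul_mul, hJL, smul_zero]), hQ,
      dm_smul_of_one_zero]
  · rw [one_sub_dm_neg_mul_dm (by rw [hP, Matrix.mul_smul, hLJ, smul_zero]), hP,
      dm_smul_of_one_zero]

/-- For the dual Laplacian `L_w = L + L̂ ε` of a connected dual number weighted graph with
dual Moore-Penrose inverse `L_w† = L† - L† L̂ L† ε`, one has
`I - L_w L_w† = I - L_w† L_w = (1/n) J`. -/
theorem dual_laplacian_mp_complement {n : ℕ} (hn : 0 < n)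
    (G : SimpleGraph (Fin n)) [DecidableRel G.Adj] (hG : G.Connected)
    (Lhat : Matrix (Fin n) (Fin n) ℝ) (hsym : Lhatᵀ = Lhat)
    (hrow : Lhat *ᵥ (fun _ => (1 : ℝ)) = 0)
    (hcol : (fun _ => (1 : ℝ)) ᵥ* Lhat = 0)
    (Ld : Matrix (Fin n) (Fin n) ℝ)
    (h1 : G.lapMatrix ℝ * Ld * G.lapMatrix ℝ = G.lapMatrix ℝ)
    (h2 : Ld * G.lapMatrix ℝ * Ld = Ld)
    (h3 : (G.lapMatrix ℝ * Ld)ᵀ = G.lapMatrix ℝ * Ld)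
    (h4 : (Ld * G.lapMatrix ℝ)ᵀ = Ld * G.lapMatrix ℝ) :
    (1 : Matrix (Fin n) (Fin n) (DualNumber ℝ))
        - dm (G.lapMatrix ℝ) Lhat * dm Ld (-(Ld * Lhat * Ld))
      = (n : ℝ)⁻¹ • Matrix.of (fun _ _ => (1 : DualNumber ℝ)) ∧
    (1 : Matrix (Fin n) (Fin n) (DualNumber ℝ))
        - dm Ld (-(Ld * Lhat * Ld)) * dm (G.lapMatrix ℝ) Lhat
      = (n : ℝ)⁻¹ • Matrix.of (fun _ _ => (1 : DualNumber ℝ)) :=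
  dual_laplacian_mp_complement_general G hG Lhat hrow hcol Ld h1 h3 h4
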